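/- (Theorem 4.1, deterministic generalization bound under distribution shift.) Let P̃ and P* be Borel probability measures on ℝ^m with finite first moments, let ε > 0, τ_ε := (1+ε)·inf_{x∈𝒳} E_{P̂}[h(x,ξ)] (assumed finite), J̃ := inf_{x∈𝒳} E_{P̃}[h(x,ξ)] (assumed finite), and suppose (x̂, k̂) ∈ 𝒳 × [0,∞) is RS-feasible for τ_ε with respect to P̂. Then E_{P̃}[h(x̂,ξ)] − J̃ ≤ ε·J̃ + (2+ε)·L·d_W(P*, P̃) + (2+ε)·L·d_W(P*, P̂). -/

import Mathlib

/-!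
Lipschitz continuity bounds the change of every expected loss by `L` times the Wasserstein
distance, so moving from `P̂` to `P̃` through `P*` changes both `E[h(x̂, ·)]` and the optimal value
by at most `δ := L d_W(P*, P̃) + L d_W(P*, P̂)`. Feasibility tested at `P̂` itself (where
`d_W(P̂, P̂) = 0`) gives `E_{P̂}[h(x̂, ·)] ≤ τ_ε = (1 + ε) Ĵ` with `Ĵ := inf_x E_{P̂}[h(x, ·)]`, hence
`E_{P̃}[h(x̂, ·)] ≤ (1 + ε) Ĵ + δ ≤ (1 + ε) (J̃ + δ) + δ`.
-/

open MeasureTheory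

noncomputable section

abbrev Vec (m : ℕ) := EuclideanSpace ℝ (Fin m)

/-- A coupling of two Borel probability measures on `Vec m`. -/
def IsCoupling {m : ℕ} (γ : Measure (Vec m × Vec m)) (P Q : Measure (Vec m)) : Prop :=
  IsProbabilityMeasure γ ∧ γ.map Prod.fst = P ∧ γ.map Prod.snd = Q

/-- Type-1 Wasserstein distance: infimum of `∫ ‖ξ₁ - ξ₂‖₂ dγ` over couplings `γ`. -/
noncomputable def wDist {m : ℕ} (P Q : Measure (Vec m)) : ℝ :=
  sInf {c : ℝ | ∃ γ : Measure (Vec m × Vec m), IsCoupling γ P Q ∧ c = ∫ p, ‖p.1 - p.2‖ ∂γ}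

/-- `(x, k)` is RS-feasible for reference value `τ` with respect to `Phat`. -/
def RSFeasible {m : ℕ} {X : Type*} (h : X → Vec m → ℝ)
    (Phat : Measure (Vec m)) (τ : ℝ) (x : X) (k : ℝ) : Prop :=
  0 ≤ k ∧ ∀ P : Measure (Vec m), IsProbabilityMeasure P →
    Integrable (fun ξ => ‖ξ‖) P → (∫ ξ, h x ξ ∂P) - τ ≤ k * wDist P Phat

/-- Empirical measure `(1/N) ∑ δ_{x i}`. -/
noncomputable def empMeas {m N : ℕ} (xs : Fin N → Vec m) : Measure (Vec m) :=
  (N : ENNReal)⁻¹ • ∑ i : Fin N, Measure.dirac (xs i)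

section Coupling

variable {m : ℕ} {γ : Measure (Vec m × Vec m)} {P Q : Measure (Vec m)}

lemma isCoupling_prod [IsProbabilityMeasure P] [IsProbabilityMeasure Q] :
    IsCoupling (P.prod Q) P Q :=
  ⟨inferInstance, by simp, by simp⟩

lemma isCoupling_map_diag [IsProbabilityMeasure P] :
    IsCoupling (P.map fun ξ => (ξ, ξ)) P P := by
  have hdiag : Measurable fun ξ : Vec m => (ξ, ξ) := by fun_prop
  refine ⟨Measure.isProbabilityMeasure_map hdiag.aemeasurable, ?_, ?_⟩
  · rw [Measure.map_map measurable_fst hdiag]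
    exact Measure.map_id
  · rw [Measure.map_map measurable_snd hdiag]
    exact Measure.map_id

namespace IsCoupling

variable {E : Type*} [NormedAddCommGroup E] {f : Vec m → E}

lemma integrable_comp_fst (hγ : IsCoupling γ P Q) (hf : Integrable f P) :
    Integrable (fun p => f p.1) γ :=
  (hγ.2.1 ▸ hf).comp_measurable measurable_fst

lemma integrable_comp_snd (hγ : IsCoupling γ P Q) (hf : Integrable f Q) :
    Integrable (fun p => f p.2) γ :=
  (hγ.2.2 ▸ hf).comp_measurable measurable_snd

variable [NormedSpace ℝ E]

lemma integral_comp_fst (hγ : IsCoupling γ P Q) (hf : AEStronglyMeasurable f P) :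
    ∫ p, f p.1 ∂γ = ∫ ξ, f ξ ∂P := by
  rw [← hγ.2.1] at hf ⊢
  exact (integral_map measurable_fst.aemeasurable hf).symm

lemma integral_comp_snd (hγ : IsCoupling γ P Q) (hf : AEStronglyMeasurable f Q) :
    ∫ p, f p.2 ∂γ = ∫ ξ, f ξ ∂Q := by
  rw [← hγ.2.2] at hf ⊢
  exact (integral_map measurable_snd.aemeasurable hf).symm

lemma integrable_norm_sub (hγ : IsCoupling γ P Q) (hP : Integrable (fun ξ => ‖ξ‖) P)
    (hQ : Integrable (fun ξ => ‖ξ‖) Q) : Integrable (fun p => ‖p.1 - p.2‖) γ := by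
  have hidP : Integrable id P := (integrable_norm_iff aestronglyMeasurable_id).mp hP
  have hidQ : Integrable id Q := (integrable_norm_iff aestronglyMeasurable_id).mp hQ
  exact ((hγ.integrable_comp_fst hidP).sub (hγ.integrable_comp_snd hidQ)).norm

lemma abs_integral_sub_le {f : Vec m → ℝ} {L : ℝ} (hγ : IsCoupling γ P Q)
    (hLip : ∀ ξ η, |f ξ - f η| ≤ L * ‖ξ - η‖) (hfP : Integrable f P) (hfQ : Integrable f Q)
    (hP : Integrable (fun ξ => ‖ξ‖) P) (hQ : Integrable (fun ξ => ‖ξ‖) Q) :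
    |(∫ ξ, f ξ ∂P) - ∫ ξ, f ξ ∂Q| ≤ L * ∫ p, ‖p.1 - p.2‖ ∂γ := by
  have hf₁ := hγ.integrable_comp_fst hfP
  have hf₂ := hγ.integrable_comp_snd hfQ
  rw [← hγ.integral_comp_fst hfP.1, ← hγ.integral_comp_snd hfQ.1, ← integral_sub hf₁ hf₂,
    ← integral_const_mul]
  calc |∫ p, (f p.1 - f p.2) ∂γ| ≤ ∫ p, |f p.1 - f p.2| ∂γ :=
        abs_integral_le_integral_abs
    _ ≤ ∫ p, L * ‖p.1 - p.2‖ ∂γ :=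
        integral_mono (hf₁.sub hf₂).abs ((hγ.integrable_norm_sub hP hQ).const_mul L)
          fun p => hLip p.1 p.2

end IsCoupling

lemma wDist_self [IsProbabilityMeasure P] : wDist P P = 0 := by
  have hdiag_cost : 0 = ∫ p, ‖p.1 - p.2‖ ∂(P.map fun ξ => (ξ, ξ)) := by
    rw [integral_map (f := fun p : Vec m × Vec m => ‖p.1 - p.2‖)
      (by fun_prop : Measurable fun ξ : Vec m => (ξ, ξ)).aemeasurable
      (continuous_fst.sub continuous_snd).norm.aestronglyMeasurable]
    simp
  have hcost_nonneg : ∀ c ∈ {c : ℝ | ∃ γ : Measure (Vec m × Vec m),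
      IsCoupling γ P P ∧ c = ∫ p, ‖p.1 - p.2‖ ∂γ}, 0 ≤ c := by
    rintro c ⟨γ, -, rfl⟩
    exact integral_nonneg fun p => norm_nonneg _
  exact le_antisymm (csInf_le ⟨0, hcost_nonneg⟩ ⟨_, isCoupling_map_diag, hdiag_cost⟩)
    (le_csInf ⟨0, _, isCoupling_map_diag, hdiag_cost⟩ hcost_nonneg)

lemma abs_integral_sub_le_mul_wDist [IsProbabilityMeasure P] [IsProbabilityMeasure Q]
    {f : Vec m → ℝ} {L : ℝ} (hL : 0 ≤ L) (hLip : ∀ ξ η, |f ξ - f η| ≤ L * ‖ξ - η‖)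
    (hfP : Integrable f P) (hfQ : Integrable f Q)
    (hP : Integrable (fun ξ => ‖ξ‖) P) (hQ : Integrable (fun ξ => ‖ξ‖) Q) :
    |(∫ ξ, f ξ ∂P) - ∫ ξ, f ξ ∂Q| ≤ L * wDist P Q := by
  rw [wDist, ← smul_eq_mul, ← Real.sInf_smul_of_nonneg hL]
  refine le_csInf ⟨_, _, ⟨_, isCoupling_prod, rfl⟩, rfl⟩ ?_
  rintro _ ⟨_, ⟨γ, hγ, rfl⟩, rfl⟩
  exact hγ.abs_integral_sub_le hLip hfP hfQ hP hQ

end Coupling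

lemma ciInf_le_ciInf_add {ι : Type*} [Nonempty ι] {F G : ι → ℝ} {δ : ℝ}
    (hG : BddBelow (Set.range G)) (h : ∀ i, G i ≤ F i + δ) : ⨅ i, G i ≤ (⨅ i, F i) + δ := by
  rw [← sub_le_iff_le_add]
  exact le_ciInf fun i => sub_le_iff_le_add.mpr ((ciInf_le hG i).trans (h i))

theorem deterministic_generalization_bound_shift_general {m : ℕ} {X : Type*} [Nonempty X]
    (h : X → Vec m → ℝ) (L : ℝ) (hL : 0 ≤ L)
    (hLip : ∀ x ξ η, |h x ξ - h x η| ≤ L * ‖ξ - η‖)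
    (Pstar Ptilde Phat : Measure (Vec m))
    [IsProbabilityMeasure Pstar] [IsProbabilityMeasure Ptilde] [IsProbabilityMeasure Phat]
    (hPstarmom : Integrable (fun ξ => ‖ξ‖) Pstar)
    (hPtildemom : Integrable (fun ξ => ‖ξ‖) Ptilde)
    (hPhatmom : Integrable (fun ξ => ‖ξ‖) Phat)
    (hIntPstar : ∀ x, Integrable (h x) Pstar)
    (hIntPtilde : ∀ x, Integrable (h x) Ptilde)
    (hIntPhat : ∀ x, Integrable (h x) Phat)
    (ε : ℝ) (hε : 0 < ε)
    (τ : ℝ) (hτ : τ = (1 + ε) * ⨅ x, ∫ ξ, h x ξ ∂Phat)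
    (hfinPhat : BddBelow (Set.range fun x => ∫ ξ, h x ξ ∂Phat))
    (xhat : X) (khat : ℝ) (hfeas : RSFeasible h Phat τ xhat khat) :
    (∫ ξ, h xhat ξ ∂Ptilde) - (⨅ x, ∫ ξ, h x ξ ∂Ptilde) ≤
      ε * (⨅ x, ∫ ξ, h x ξ ∂Ptilde) + (2 + ε) * L * wDist Pstar Ptilde
        + (2 + ε) * L * wDist Pstar Phat := by
  set δ := L * wDist Pstar Ptilde + L * wDist Pstar Phat
  have hshift : ∀ x, |(∫ ξ, h x ξ ∂Ptilde) - ∫ ξ, h x ξ ∂Phat| ≤ δ := fun x =>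
    calc _ ≤ |(∫ ξ, h x ξ ∂Ptilde) - ∫ ξ, h x ξ ∂Pstar|
          + |(∫ ξ, h x ξ ∂Pstar) - ∫ ξ, h x ξ ∂Phat| := abs_sub_le _ _ _
      _ ≤ δ := by
        rw [abs_sub_comm]
        exact add_le_add
          (abs_integral_sub_le_mul_wDist hL (hLip x) (hIntPstar x) (hIntPtilde x)
            hPstarmom hPtildemom)
          (abs_integral_sub_le_mul_wDist hL (hLip x) (hIntPstar x) (hIntPhat x)
            hPstarmom hPhatmom)
  have hxhat : (∫ ξ, h xhat ξ ∂Phat) ≤ τ := by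
    simpa [wDist_self] using hfeas.2 Phat inferInstance hPhatmom
  have hJ : (⨅ x, ∫ ξ, h x ξ ∂Phat) ≤ (⨅ x, ∫ ξ, h x ξ ∂Ptilde) + δ :=
    ciInf_le_ciInf_add hfinPhat fun x => by linarith [(abs_le.mp (hshift x)).1]
  have hτJ := mul_le_mul_of_nonneg_left hJ (by linarith : 0 ≤ 1 + ε)
  linarith [(abs_le.mp (hshift xhat)).2]

/-- Theorem 4.1, deterministic generalization bound under shift:
E_{Ptilde}[h(xhat,.)] - Jtilde <= eps Jtilde + (2+eps) L d_W(P*,Ptilde)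
  + (2+eps) L d_W(P*,Phat). -/
theorem deterministic_generalization_bound_shift {m : ℕ} {X : Type*} [Nonempty X]
    (h : X → Vec m → ℝ) (L : ℝ) (hL : 0 ≤ L)
    (hLip : ∀ x ξ η, |h x ξ - h x η| ≤ L * ‖ξ - η‖)
    (Pstar Ptilde Phat : Measure (Vec m))
    [IsProbabilityMeasure Pstar] [IsProbabilityMeasure Ptilde] [IsProbabilityMeasure Phat]
    (hPstarmom : Integrable (fun ξ => ‖ξ‖) Pstar)
    (hPtildemom : Integrable (fun ξ => ‖ξ‖) Ptilde)
    (hPhatmom : Integrable (fun ξ => ‖ξ‖) Phat)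
    (hIntPstar : ∀ x, Integrable (h x) Pstar)
    (hIntPtilde : ∀ x, Integrable (h x) Ptilde)
    (hIntPhat : ∀ x, Integrable (h x) Phat)
    (ε : ℝ) (hε : 0 < ε)
    (τ : ℝ) (hτ : τ = (1 + ε) * ⨅ x, ∫ ξ, h x ξ ∂Phat)
    (hfinPhat : BddBelow (Set.range fun x => ∫ ξ, h x ξ ∂Phat))
    (hfinPtilde : BddBelow (Set.range fun x => ∫ ξ, h x ξ ∂Ptilde))
    (xhat : X) (khat : ℝ) (hfeas : RSFeasible h Phat τ xhat khat) :
    (∫ ξ, h xhat ξ ∂Ptilde) - (⨅ x, ∫ ξ, h x ξ ∂Ptilde) ≤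
      ε * (⨅ x, ∫ ξ, h x ξ ∂Ptilde) + (2 + ε) * L * wDist Pstar Ptilde
        + (2 + ε) * L * wDist Pstar Phat :=
  deterministic_generalization_bound_shift_general h L hL hLip Pstar Ptilde Phat hPstarmom
    hPtildemom hPhatmom hIntPstar hIntPtilde hIntPhat ε hε τ hτ hfinPhat xhat khat hfeas
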